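/- arXiv:2509.03105 — 9 statements merged into one kernel-verified Lean document; each statement's English description precedes it below -/
import Mathlib

section
/- For all nonzero complex numbers z₁ and z₂, one has |z₁ + z₂| ≥ (|z₁| + |z₂|)·|cos((arg z₁ − arg z₂)/2)|. -/
/-! Rotating `z₁ + z₂` by the mean angle `(arg z₁ + arg z₂) / 2` leaves its norm unchanged and turns
its real part into `(‖z₁‖ + ‖z₂‖) * cos ((arg z₁ - arg z₂) / 2)`; a real part is bounded by the norm. -/

open Complex

lemma Complex.re_mul_exp_neg_mul_I (z : ℂ) (θ : ℝ) :
    (z * exp (-(θ * I))).re = ‖z‖ * Real.cos (arg z - θ) := by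
  conv_lhs => rw [← norm_mul_exp_arg_mul_I z]
  rw [mul_assoc, ← exp_add, ← sub_eq_add_neg, ← sub_mul, ← ofReal_sub, re_ofReal_mul,
    exp_ofReal_mul_I_re]

theorem stmt_0_general (z₁ z₂ : ℂ) :
    (‖z₁‖ + ‖z₂‖) * |Real.cos ((z₁.arg - z₂.arg) / 2)| ≤
      ‖z₁ + z₂‖ := by
  set δ := (z₁.arg - z₂.arg) / 2
  set φ := (z₁.arg + z₂.arg) / 2
  have h₁ : z₁.arg - φ = δ := by ring
  have h₂ : z₂.arg - φ = -δ := by ring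
  calc (‖z₁‖ + ‖z₂‖) * |Real.cos δ|
      = |((z₁ + z₂) * exp (-(φ * I))).re| := by
        rw [add_mul z₁, add_re, re_mul_exp_neg_mul_I, re_mul_exp_neg_mul_I, h₁, h₂, Real.cos_neg,
          ← add_mul, abs_mul, abs_of_nonneg (a := ‖z₁‖ + ‖z₂‖) (by positivity)]
    _ ≤ ‖(z₁ + z₂) * exp (-(φ * I))‖ := abs_re_le_norm _
    _ = ‖z₁ + z₂‖ := by rw [norm_mul, ← neg_mul, ← ofReal_neg, norm_exp_ofReal_mul_I, mul_one]

theorem stmt_0 (z₁ z₂ : ℂ) (hz₁ : z₁ ≠ 0) (hz₂ : z₂ ≠ 0) :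
    (‖z₁‖ + ‖z₂‖) * |Real.cos ((z₁.arg - z₂.arg) / 2)| ≤
      ‖z₁ + z₂‖ :=
  stmt_0_general z₁ z₂
end

section
/- For all nonzero complex numbers z₁ and z₂ with |arg z₁| + |arg z₂| < π, one has z₁ + z₂ ≠ 0 and |arg(z₁ + z₂)| ≤ max(|arg z₁|, |arg z₂|). -/
/-!
If `arg z₁ ≤ arg z₂ < arg z₁ + π`, rotate both numbers by the mean angle `c` of their arguments;
they then lie in the sector `|arg w| ≤ d` with `d = (arg z₂ - arg z₁) / 2 < π / 2`. For `d ≤ π / 2`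
that sector is the convex cone `cos d * ‖w‖ ≤ re w`, so it contains the sum, and the sum has
positive real part. Rotating back, `arg (z₁ + z₂)` lies between `arg z₁` and `arg z₂`.
-/

open Real Set

namespace Complex

lemma arg_exp_mul_I_of_mem_Ioc {θ : ℝ} (hθ : θ ∈ Ioc (-π) π) : arg (exp (θ * I)) = θ := by
  rw [exp_mul_I, arg_cos_add_sin_mul_I hθ]

lemma arg_mul_exp_mul_I {z : ℂ} (hz : z ≠ 0) {θ : ℝ} (hθ : θ ∈ Ioc (-π) π)
    (h : arg z + θ ∈ Ioc (-π) π) : arg (z * exp (θ * I)) = arg z + θ := by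
  have hθ' := arg_exp_mul_I_of_mem_Ioc hθ
  rw [arg_mul hz (exp_ne_zero _) (by rwa [hθ']), hθ']

lemma exists_eq_mul_exp_mul_I_of_abs_arg_sub_le {z : ℂ} (hz : z ≠ 0) {c d : ℝ} (hd : d < π)
    (hzc : |arg z - c| ≤ d) : ∃ w : ℂ, w ≠ 0 ∧ |arg w| ≤ d ∧ z = w * exp (c * I) := by
  refine ⟨‖z‖ * exp ((arg z - c : ℝ) * I), by simpa using hz, ?_, ?_⟩
  · rwa [arg_real_mul _ (norm_pos_iff.2 hz),
      arg_exp_mul_I_of_mem_Ioc ⟨by linarith [abs_le.1 hzc], by linarith [abs_le.1 hzc]⟩]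
  · rw [mul_assoc, ← exp_add, ofReal_sub, sub_mul, sub_add_cancel, norm_mul_exp_arg_mul_I]

lemma abs_arg_le_iff_cos_mul_norm_le_re {d : ℝ} (hd₀ : 0 ≤ d) (hdπ : d ≤ π) (w : ℂ) :
    |arg w| ≤ d ↔ Real.cos d * ‖w‖ ≤ w.re := by
  rcases eq_or_ne w 0 with rfl | hw
  · simp [hd₀]
  rw [← norm_mul_cos_arg, ← Real.cos_abs (arg w), mul_comm,
    mul_le_mul_iff_right₀ (norm_pos_iff.2 hw)]
  exact (strictAntiOn_cos.le_iff_ge ⟨hd₀, hdπ⟩ ⟨abs_nonneg _, abs_arg_le_pi w⟩).symm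

lemma abs_arg_add_le {d : ℝ} (hd₀ : 0 ≤ d) (hd : d ≤ π / 2) {w₁ w₂ : ℂ}
    (h₁ : |arg w₁| ≤ d) (h₂ : |arg w₂| ≤ d) : |arg (w₁ + w₂)| ≤ d := by
  have hdπ : d ≤ π := hd.trans (by linarith [pi_pos])
  rw [abs_arg_le_iff_cos_mul_norm_le_re hd₀ hdπ] at h₁ h₂ ⊢
  calc Real.cos d * ‖w₁ + w₂‖ ≤ Real.cos d * (‖w₁‖ + ‖w₂‖) :=
        mul_le_mul_of_nonneg_left (norm_add_le _ _) (cos_nonneg_of_mem_Icc ⟨by linarith, hd⟩)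
    _ ≤ (w₁ + w₂).re := by rw [add_re]; linarith

lemma re_pos_of_abs_arg_lt {w : ℂ} (hw : w ≠ 0) (h : |arg w| < π / 2) : 0 < w.re :=
  (abs_arg_lt_pi_div_two_iff.1 h).resolve_right hw

theorem arg_add_mem_Icc {z₁ z₂ : ℂ} (hz₁ : z₁ ≠ 0) (hz₂ : z₂ ≠ 0) (h₁₂ : arg z₁ ≤ arg z₂)
    (h₂₁ : arg z₂ < arg z₁ + π) : z₁ + z₂ ≠ 0 ∧ arg (z₁ + z₂) ∈ Icc (arg z₁) (arg z₂) := by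
  have h₁ := neg_pi_lt_arg z₁
  have h₂ := arg_le_pi z₂
  obtain ⟨c, hc⟩ : ∃ c, c = (arg z₁ + arg z₂) / 2 := ⟨_, rfl⟩
  obtain ⟨d, hd⟩ : ∃ d, d = (arg z₂ - arg z₁) / 2 := ⟨_, rfl⟩
  have hd₀ : 0 ≤ d := by linarith
  have hdπ : d < π / 2 := by linarith
  obtain ⟨w₁, hw₁, hw₁d, hz₁w⟩ := exists_eq_mul_exp_mul_I_of_abs_arg_sub_le hz₁
    (c := c) (d := d) (by linarith) (abs_le.2 ⟨by linarith, by linarith⟩)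
  obtain ⟨w₂, hw₂, hw₂d, hz₂w⟩ := exists_eq_mul_exp_mul_I_of_abs_arg_sub_le hz₂
    (c := c) (d := d) (by linarith) (abs_le.2 ⟨by linarith, by linarith⟩)
  have hw : w₁ + w₂ ≠ 0 := by
    refine ne_of_apply_ne re (ne_of_gt ?_)
    rw [add_re, zero_re]
    exact add_pos (re_pos_of_abs_arg_lt hw₁ (by linarith))
      (re_pos_of_abs_arg_lt hw₂ (by linarith))
  have hwd := abs_le.1 (abs_arg_add_le hd₀ hdπ.le hw₁d hw₂d)
  have hsum : z₁ + z₂ = (w₁ + w₂) * exp (c * I) := by rw [hz₁w, hz₂w, add_mul]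
  rw [hsum, arg_mul_exp_mul_I hw ⟨by linarith, by linarith⟩ ⟨by linarith, by linarith⟩]
  exact ⟨mul_ne_zero hw (exp_ne_zero _), by linarith, by linarith⟩

end Complex

theorem stmt_3 (z₁ z₂ : ℂ) (hz₁ : z₁ ≠ 0) (hz₂ : z₂ ≠ 0)
    (h : |z₁.arg| + |z₂.arg| < Real.pi) :
    z₁ + z₂ ≠ 0 ∧ |(z₁ + z₂).arg| ≤ max |z₁.arg| |z₂.arg| := by
  wlog h₁₂ : z₁.arg ≤ z₂.arg generalizing z₁ z₂
  · rw [add_comm, max_comm]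
    exact this z₂ z₁ hz₂ hz₁ (by rwa [add_comm]) (le_of_not_ge h₁₂)
  obtain ⟨hne, hmem⟩ := Complex.arg_add_mem_Icc hz₁ hz₂ h₁₂
    (by linarith [le_abs_self z₂.arg, neg_abs_le z₁.arg])
  exact ⟨hne, abs_le_max_abs_abs hmem.1 hmem.2⟩
end

section
/- Let ω′ ∈ (0, π), let z be a nonzero complex number with |arg z| < ω′, and let λ be a nonzero complex number with |arg λ| > ω′. Then |λ − z| ≥ |λ| · min( sin((ω′ − |arg z|)/2), cos(ω′/2) ), and the quantity min( sin((ω′ − |arg z|)/2), cos(ω′/2) ) is strictly positive. -/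
/-!
Put `ψ = min ((ω' - |arg z|) / 2) ((π - ω') / 2)`, so that the minimum in the statement is
`sin ψ` with `0 < ψ ≤ π / 4`. Since `|arg λ| > ω'`, the arguments of `λ` and `z` differ by an
angle between `2ψ` and `2π - 2ψ`, and a point seen from the origin at angle at least `2ψ` from
`λ` lies at distance at least `|λ| sin 2ψ ≥ |λ| sin ψ` from `λ`.
-/

open Real ComplexConjugate

theorem Real.cos_le_cos_of_le_abs_of_abs_le_two_pi_sub {t θ : ℝ} (hθ : 0 ≤ θ) (hle : θ ≤ |t|)
    (hge : |t| ≤ 2 * π - θ) : cos t ≤ cos θ := by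
  rw [← cos_abs]
  rcases le_total |t| π with ht | ht
  · exact cos_le_cos_of_nonneg_of_le_pi hθ ht hle
  · rw [← cos_two_pi_sub |t|]
    exact cos_le_cos_of_nonneg_of_le_pi hθ (by linarith) (by linarith)

theorem Real.sin_le_sin_two_mul {x : ℝ} (h0 : 0 ≤ x) (h : x ≤ π / 4) : sin x ≤ sin (2 * x) :=
  sin_le_sin_of_le_of_le_pi_div_two (by linarith) (by linarith) (by linarith)

namespace Complex

theorem re_mul_conj_eq_norm_mul_norm_mul_cos_arg_sub (w z : ℂ) :
    (w * conj z).re = ‖w‖ * ‖z‖ * Real.cos (w.arg - z.arg) := by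
  rw [Real.cos_sub, mul_re, conj_re, conj_im, ← norm_mul_cos_arg w, ← norm_mul_sin_arg w,
    ← norm_mul_cos_arg z, ← norm_mul_sin_arg z]
  ring

theorem norm_mul_abs_sin_le_norm_sub {w z : ℂ} {θ : ℝ}
    (hcos : Real.cos (w.arg - z.arg) ≤ Real.cos θ) : ‖w‖ * |Real.sin θ| ≤ ‖w - z‖ := by
  have hsq : ‖w - z‖ ^ 2 = ‖w‖ ^ 2 + ‖z‖ ^ 2 - 2 * (‖w‖ * ‖z‖ * Real.cos (w.arg - z.arg)) := by
    rw [Complex.sq_norm, Complex.sq_norm, Complex.sq_norm, normSq_sub,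
      re_mul_conj_eq_norm_mul_norm_mul_cos_arg_sub]
  have hnn : 0 ≤ ‖w‖ * ‖z‖ := by positivity
  -- `‖w‖² + ‖z‖² - 2 ‖w‖ ‖z‖ cos θ = (‖z‖ - ‖w‖ cos θ)² + ‖w‖² sin² θ`
  have hkey : (‖w‖ * |Real.sin θ|) ^ 2 ≤ ‖w - z‖ ^ 2 := by
    rw [hsq, mul_pow, sq_abs]
    nlinarith [sq_nonneg (‖z‖ - ‖w‖ * Real.cos θ), mul_le_mul_of_nonneg_left hcos hnn,
      Real.sin_sq_add_cos_sq θ]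
  exact (pow_le_pow_iff_left₀ (by positivity) (norm_nonneg _) two_ne_zero).mp hkey

end Complex

theorem stmt_4_general (ω' : ℝ) (hω' : ω' ∈ Set.Ioo 0 Real.pi)
    (z : ℂ) (hzarg : |z.arg| < ω')
    (lam : ℂ) (hlamarg : ω' < |lam.arg|) :
    ‖lam‖ * min (Real.sin ((ω' - |z.arg|) / 2)) (Real.cos (ω' / 2)) ≤
      ‖lam - z‖ ∧
    0 < min (Real.sin ((ω' - |z.arg|) / 2)) (Real.cos (ω' / 2)) := by
  obtain ⟨hω0, hωπ⟩ := hω'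
  have hlamπ : |lam.arg| ≤ π := Complex.abs_arg_le_pi lam
  have hz0 : 0 ≤ |z.arg| := abs_nonneg _
  set ψ := min ((ω' - |z.arg|) / 2) ((π - ω') / 2) with hψ
  have hleft : ψ ≤ (ω' - |z.arg|) / 2 := min_le_left _ _
  have hright : ψ ≤ (π - ω') / 2 := min_le_right _ _
  have hψ0 : 0 < ψ := lt_min (by linarith) (by linarith)
  have hmin : min (sin ((ω' - |z.arg|) / 2)) (cos (ω' / 2)) = sin ψ := by
    rw [← sin_pi_div_two_sub, show π / 2 - ω' / 2 = (π - ω') / 2 by ring]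
    rcases le_total ((ω' - |z.arg|) / 2) ((π - ω') / 2) with h | h
    · rw [hψ, min_eq_left h, min_eq_left (sin_le_sin_of_le_of_le_pi_div_two
        (by linarith) (by linarith) h)]
    · rw [hψ, min_eq_right h, min_eq_right (sin_le_sin_of_le_of_le_pi_div_two
        (by linarith) (by linarith) h)]
  have hangle : cos (lam.arg - z.arg) ≤ cos (2 * ψ) :=
    cos_le_cos_of_le_abs_of_abs_le_two_pi_sub (by linarith)
      (by linarith [abs_sub_abs_le_abs_sub lam.arg z.arg]) (by linarith [abs_sub lam.arg z.arg])
  have hsin2ψ : 0 ≤ sin (2 * ψ) := sin_nonneg_of_nonneg_of_le_pi (by linarith) (by linarith)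
  rw [hmin]
  refine ⟨?_, sin_pos_of_pos_of_lt_pi hψ0 (by linarith)⟩
  calc ‖lam‖ * sin ψ ≤ ‖lam‖ * |sin (2 * ψ)| := by
        rw [abs_of_nonneg hsin2ψ]
        exact mul_le_mul_of_nonneg_left (sin_le_sin_two_mul hψ0.le (by linarith)) (norm_nonneg _)
    _ ≤ ‖lam - z‖ := Complex.norm_mul_abs_sin_le_norm_sub hangle

theorem stmt_4 (ω' : ℝ) (hω' : ω' ∈ Set.Ioo 0 Real.pi)
    (z : ℂ) (hz : z ≠ 0) (hzarg : |z.arg| < ω')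
    (lam : ℂ) (hlam : lam ≠ 0) (hlamarg : ω' < |lam.arg|) :
    ‖lam‖ * min (Real.sin ((ω' - |z.arg|) / 2)) (Real.cos (ω' / 2)) ≤
      ‖lam - z‖ ∧
    0 < min (Real.sin ((ω' - |z.arg|) / 2)) (Real.cos (ω' / 2)) :=
  stmt_4_general ω' hω' z hzarg lam hlamarg
end

section
/- Let ω_T ∈ (0, π), let z be a nonzero complex number with |arg z| < π − ω_T, let ω′ ∈ (max(ω_T, π − ω_T), π), and let λ be a nonzero complex number with |arg λ| > ω′. Then |λ − z| ≥ |λ| · min( sin((ω′ − (π − ω_T))/2), sin(π − ω_T/2) ), and the quantity min( sin((ω′ − (π − ω_T))/2), sin(π − ω_T/2) ), which does not depend on z and λ, is strictly positive. -/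
/-!
By the law of cosines, `‖λ - z‖ ≥ ‖λ‖ · sin(|arg λ - arg z| / 2)` for all complex `λ, z`.
Under the hypotheses, `|arg λ - arg z|` lies between `ω' - (π - ω_T)` and `2π - ω_T`, and on
the corresponding interval of half-angles, contained in `[0, π]`, the concave function `sin` is
bounded below by its values at the endpoints.
-/

open Real

theorem Complex.law_cos_arg_sub (w z : ℂ) :
    ‖w - z‖ ^ 2 = ‖w‖ ^ 2 + ‖z‖ ^ 2 - 2 * ‖w‖ * ‖z‖ * Real.cos (w.arg - z.arg) := by
  have hw := Complex.norm_mul_cos_arg w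
  have hw' := Complex.norm_mul_sin_arg w
  have hz := Complex.norm_mul_cos_arg z
  have hz' := Complex.norm_mul_sin_arg z
  rw [Real.cos_sub, Complex.sq_norm, Complex.sq_norm, Complex.sq_norm, Complex.normSq_apply,
    Complex.normSq_apply, Complex.normSq_apply, Complex.sub_re, Complex.sub_im]
  linear_combination 2 * (‖z‖ * Real.cos z.arg * hw + w.re * hz +
    ‖z‖ * Real.sin z.arg * hw' + w.im * hz')

theorem sq_mul_sin_half_le (r t θ : ℝ) (hr : 0 ≤ r) (ht : 0 ≤ t) :
    (r * sin (θ / 2)) ^ 2 ≤ r ^ 2 + t ^ 2 - 2 * r * t * cos θ := by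
  have hcos : cos θ = 1 - 2 * sin (θ / 2) ^ 2 := by
    have h := cos_two_mul' (θ / 2)
    rw [mul_div_cancel₀ θ two_ne_zero, cos_sq'] at h
    linarith
  have hs : sin (θ / 2) ^ 2 ≤ 1 := sin_sq_le_one _
  rw [hcos, mul_pow]
  rcases le_or_gt (1 - 2 * sin (θ / 2) ^ 2) 0 with hc | hc
  · nlinarith [mul_nonneg (mul_nonneg hr ht) (neg_nonneg.2 hc), sq_nonneg t,
      mul_nonneg (sq_nonneg r) (sub_nonneg.2 hs)]
  · -- minimise over `t`: the minimum is at `t = r cos θ`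
    nlinarith [sq_nonneg (t - r * (1 - 2 * sin (θ / 2) ^ 2)),
      mul_nonneg (mul_nonneg (sq_nonneg r) (sq_nonneg (sin (θ / 2)))) hc.le]

theorem Complex.norm_mul_sin_half_abs_arg_sub_le (w z : ℂ) :
    ‖w‖ * Real.sin (|w.arg - z.arg| / 2) ≤ ‖w - z‖ := by
  have h := sq_mul_sin_half_le ‖w‖ ‖z‖ |w.arg - z.arg| (norm_nonneg w) (norm_nonneg z)
  rw [cos_abs, ← Complex.law_cos_arg_sub] at h
  exact (le_abs_self _).trans (abs_le_of_sq_le_sq h (norm_nonneg _))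

theorem Real.min_sin_le_sin_of_mem_Icc {x y u : ℝ} (hx : 0 ≤ x) (hy : y ≤ π)
    (hu : u ∈ Set.Icc x y) : min (sin x) (sin y) ≤ sin u :=
  strictConcaveOn_sin_Icc.concaveOn.min_le_of_mem_Icc ⟨hx, hu.1.trans (hu.2.trans hy)⟩
    ⟨hx.trans (hu.1.trans hu.2), hy⟩ hu

theorem stmt_5_general (ωT : ℝ)
    (z : ℂ) (hzarg : |z.arg| < Real.pi - ωT)
    (ω' : ℝ) (hω' : ω' ∈ Set.Ioo (max ωT (Real.pi - ωT)) Real.pi)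
    (lam : ℂ) (hlamarg : ω' < |lam.arg|) :
    ‖lam‖ *
        min (Real.sin ((ω' - (Real.pi - ωT)) / 2)) (Real.sin (Real.pi - ωT / 2)) ≤
      ‖lam - z‖ ∧
    0 < min (Real.sin ((ω' - (Real.pi - ωT)) / 2)) (Real.sin (Real.pi - ωT / 2)) := by
  obtain ⟨hω'_gt, hω'_lt⟩ := hω'
  rw [max_lt_iff] at hω'_gt
  have hθ_lower : ω' - (π - ωT) ≤ |lam.arg - z.arg| := by
    linarith [abs_sub_abs_le_abs_sub lam.arg z.arg]
  have hθ_upper : |lam.arg - z.arg| ≤ 2 * π - ωT := by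
    linarith [abs_sub lam.arg z.arg, Complex.abs_arg_le_pi lam]
  have hhalf : |lam.arg - z.arg| / 2 ∈ Set.Icc ((ω' - (π - ωT)) / 2) (π - ωT / 2) :=
    ⟨by linarith, by linarith⟩
  refine ⟨?_, lt_min ?_ ?_⟩
  · calc ‖lam‖ * min (sin ((ω' - (π - ωT)) / 2)) (sin (π - ωT / 2))
        ≤ ‖lam‖ * sin (|lam.arg - z.arg| / 2) :=
          mul_le_mul_of_nonneg_left
            (min_sin_le_sin_of_mem_Icc (by linarith) (by linarith) hhalf) (norm_nonneg _)
      _ ≤ ‖lam - z‖ := Complex.norm_mul_sin_half_abs_arg_sub_le lam z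
  · exact sin_pos_of_pos_of_lt_pi (by linarith) (by linarith)
  · exact sin_pos_of_pos_of_lt_pi (by linarith) (by linarith)

theorem stmt_5 (ωT : ℝ) (hωT : ωT ∈ Set.Ioo 0 Real.pi)
    (z : ℂ) (hz : z ≠ 0) (hzarg : |z.arg| < Real.pi - ωT)
    (ω' : ℝ) (hω' : ω' ∈ Set.Ioo (max ωT (Real.pi - ωT)) Real.pi)
    (lam : ℂ) (hlam : lam ≠ 0) (hlamarg : ω' < |lam.arg|) :
    ‖lam‖ *
        min (Real.sin ((ω' - (Real.pi - ωT)) / 2)) (Real.sin (Real.pi - ωT / 2)) ≤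
      ‖lam - z‖ ∧
    0 < min (Real.sin ((ω' - (Real.pi - ωT)) / 2)) (Real.sin (Real.pi - ωT / 2)) :=
  stmt_5_general ωT z hzarg ω' hω' lam hlamarg
end

section
/- Let X be a complex Banach space, T a bounded linear operator on X, ω_T ∈ [0, π), M > 0, z a nonzero complex number with |arg z| + ω_T < π, and ω′ ∈ (max(ω_T, |arg z|), π). Assume that every nonzero complex number μ with |arg μ| > ω_T lies in the resolvent set of T and satisfies ‖(T − μI)⁻¹‖ ≤ M/|μ|. Then: (i) the spectrum of T + zI is contained in the closed sector S̄_{max(ω_T, |arg z|)}; and (ii) for every nonzero complex number λ with |arg λ| > ω′, λ lies in the resolvent set of T + zI and ‖(T + zI − λI)⁻¹‖ ≤ C/|λ|, where C = M / min( sin((ω′ − |arg z|)/2), cos(ω′/2) ). -/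
/-!
Shifting by `z` turns the resolvent of `T + z` at `λ` into that of `T` at `λ - z`. When
`|arg w| + |arg z| < π`, the sum `w + z` lies in the cone spanned by `w` and `z`, so
`|arg (w + z)| ≤ max |arg w| |arg z|`; contrapositively, `λ` outside the sector of opening
`max ωT |arg z|` forces `λ - z` outside the sector of opening `ωT`, where the resolvent bound of
`T` applies. For the estimate, the angle between `λ` and `z` exceeds `ω' - |arg z|`, whence
`‖λ - z‖ ≥ ‖λ‖ sin ((ω' - |arg z|) / 2)`.
-/

open Real InnerProductGeometry

namespace InnerProductGeometry

variable {V : Type*} [NormedAddCommGroup V] [InnerProductSpace ℝ V]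

theorem angle_le_iff_cos_mul_le_inner {x y : V} (hx : x ≠ 0) (hy : y ≠ 0) {η : ℝ}
    (hη₀ : 0 ≤ η) (hηπ : η ≤ π) :
    angle x y ≤ η ↔ cos η * (‖x‖ * ‖y‖) ≤ inner ℝ x y := by
  have hxy : 0 < ‖x‖ * ‖y‖ := by positivity
  rw [← le_div_iff₀ hxy, ← cos_angle]
  constructor
  · exact cos_le_cos_of_nonneg_of_le_pi (angle_nonneg x y) hηπ
  · intro h
    simpa [arccos_cos hη₀ hηπ, arccos_cos (angle_nonneg x y) (angle_le_pi x y)] using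
      arccos_le_arccos h

theorem angle_add_le_of_angle_le {u x y : V} {η : ℝ} (hη : η < π / 2)
    (hx : angle u x ≤ η) (hy : angle u y ≤ η) : angle u (x + y) ≤ η := by
  have hη₀ : 0 ≤ η := (angle_nonneg u x).trans hx
  have hηπ : η ≤ π := by linarith [pi_pos]
  have ne_zero {v : V} (hv : angle u v ≤ η) : u ≠ 0 ∧ v ≠ 0 := by
    constructor <;> rintro rfl <;> simp at hv <;> linarith
  obtain ⟨hu, hx₀⟩ := ne_zero hx
  have hy₀ := (ne_zero hy).2
  have hcos : 0 < cos η := cos_pos_of_mem_Ioo ⟨by linarith, hη⟩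
  rw [angle_le_iff_cos_mul_le_inner hu hx₀ hη₀ hηπ] at hx
  rw [angle_le_iff_cos_mul_le_inner hu hy₀ hη₀ hηπ] at hy
  have hsum : cos η * (‖u‖ * (‖x‖ + ‖y‖)) ≤ inner ℝ u (x + y) := by
    rw [inner_add_right]; linarith
  have hpos : 0 < cos η * (‖u‖ * (‖x‖ + ‖y‖)) := by
    have := norm_pos_iff.mpr hu; have := norm_pos_iff.mpr hx₀; positivity
  have hxy₀ : x + y ≠ 0 := by
    rintro h
    rw [h, inner_zero_right] at hsum
    linarith
  rw [angle_le_iff_cos_mul_le_inner hu hxy₀ hη₀ hηπ]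
  refine le_trans ?_ hsum
  gcongr
  exact norm_add_le x y

theorem norm_mul_sin_angle_le_norm_sub (x y : V) : ‖x‖ * sin (angle x y) ≤ ‖x - y‖ := by
  have hcos := norm_sub_sq_eq_norm_sq_add_norm_sq_sub_two_mul_norm_mul_norm_mul_cos_angle x y
  have hpyth := sin_sq_add_cos_sq (angle x y)
  have hsin := sin_angle_nonneg x y
  nlinarith [sq_nonneg (‖y‖ - ‖x‖ * cos (angle x y)), norm_nonneg x, norm_nonneg (x - y)]

theorem norm_le_norm_sub_of_pi_div_two_le_angle {x y : V} (h : π / 2 ≤ angle x y) :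
    ‖x‖ ≤ ‖x - y‖ := by
  have hcos := norm_sub_sq_eq_norm_sq_add_norm_sq_sub_two_mul_norm_mul_norm_mul_cos_angle x y
  have : cos (angle x y) ≤ 0 :=
    cos_nonpos_of_pi_div_two_le_of_le h (by linarith [angle_le_pi x y, pi_pos])
  nlinarith [norm_nonneg x, norm_nonneg (x - y), mul_nonneg (norm_nonneg x) (norm_nonneg y)]

theorem norm_mul_sin_le_norm_sub {x y : V} {δ : ℝ} (hδ₀ : 0 ≤ δ) (hδ : δ ≤ π / 2)
    (h : δ ≤ angle x y) : ‖x‖ * sin δ ≤ ‖x - y‖ := by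
  rcases le_total (angle x y) (π / 2) with hacute | hobtuse
  · calc ‖x‖ * sin δ ≤ ‖x‖ * sin (angle x y) := by
          gcongr
          exact sin_le_sin_of_le_of_le_pi_div_two (by linarith [pi_pos]) hacute h
      _ ≤ ‖x - y‖ := norm_mul_sin_angle_le_norm_sub x y
  · calc ‖x‖ * sin δ ≤ ‖x‖ := mul_le_of_le_one_right (norm_nonneg x) (sin_le_one δ)
      _ ≤ ‖x - y‖ := norm_le_norm_sub_of_pi_div_two_le_angle hobtuse

end InnerProductGeometry

namespace Complex

theorem angle_exp_mul_I_eq_abs_sub_arg {γ : ℝ} {c : ℂ} (hc : c ≠ 0)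
    (h : γ - c.arg ∈ Set.Ioc (-π) π) : angle (exp ((γ : ℂ) * I)) c = |γ - c.arg| := by
  calc angle (exp ((γ : ℂ) * I)) c = angle (exp ((γ : ℂ) * I)) (‖c‖ • exp (c.arg * I)) := by
        rw [real_smul, norm_mul_exp_arg_mul_I]
    _ = |γ - c.arg| := by
      rw [angle_smul_right_of_pos _ _ (norm_pos_iff.mpr hc), angle_exp_exp,
        (toIocMod_eq_self _).mpr (by simpa [two_mul, ← sub_eq_add_neg] using h)]

theorem abs_arg_add_le_max {a b : ℂ} (ha : a ≠ 0) (hb : b ≠ 0) (h : |a.arg| + |b.arg| < π) :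
    |(a + b).arg| ≤ max |a.arg| |b.arg| := by
  set α := a.arg
  set β := b.arg
  set γ := (α + β) / 2 with hγ_def
  have hαβ : |α - β| < π := (abs_sub α β).trans_lt h
  have hγ : |γ| < π / 2 := by
    rw [abs_div, abs_two]; linarith [abs_add_le α β]
  have hu : angle 1 (exp ((γ : ℂ) * I)) = |γ| := by
    rw [angle_one_left (exp_ne_zero _), arg_exp_mul_I, (toIocMod_eq_self _).mpr]
    constructor <;> linarith [abs_lt.mp hγ]
  -- `exp (γ * I)` bisects the angle between `a` and `b`, so both lie within `|α - β| / 2` of it.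
  have hside {c : ℂ} (hc : c ≠ 0) (hcarg : |γ - c.arg| = |α - β| / 2) :
      angle (exp ((γ : ℂ) * I)) c ≤ |α - β| / 2 := by
    have := abs_lt.mp (hcarg.trans_lt (by linarith [pi_pos] : |α - β| / 2 < π))
    rw [angle_exp_mul_I_eq_abs_sub_arg hc ⟨this.1, this.2.le⟩, hcarg]
  have hab : angle (exp ((γ : ℂ) * I)) (a + b) ≤ |α - β| / 2 := by
    refine angle_add_le_of_angle_le (by linarith) (hside ha ?_) (hside hb ?_)
    · rw [hγ_def, show (α + β) / 2 - α = -((α - β) / 2) by ring, abs_neg, abs_div, abs_two]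
    · rw [hγ_def, show (α + β) / 2 - β = (α - β) / 2 by ring, abs_div, abs_two]
  have hab₀ : a + b ≠ 0 := by
    rintro h0
    rw [h0, angle_zero_right] at hab
    linarith
  calc |(a + b).arg| = angle 1 (a + b) := (angle_one_left hab₀).symm
    _ ≤ angle 1 (exp ((γ : ℂ) * I)) + angle (exp ((γ : ℂ) * I)) (a + b) :=
      angle_le_angle_add_angle _ _ _
    _ ≤ |α + β| / 2 + |α - β| / 2 := by
      rw [hu, hγ_def, abs_div, abs_two]; gcongr
    _ ≤ max |α| |β| := by grind

def closedSector (ω : ℝ) : Set ℂ := {ζ | ζ = 0 ∨ |ζ.arg| ≤ ω}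

theorem notMem_closedSector {ω : ℝ} {ζ : ℂ} : ζ ∉ closedSector ω ↔ ζ ≠ 0 ∧ ω < |ζ.arg| := by
  simp [closedSector]

theorem closedSector_mono {ω ω' : ℝ} (h : ω ≤ ω') : closedSector ω ⊆ closedSector ω' :=
  fun _ hζ ↦ hζ.imp_right h.trans'

theorem add_mem_closedSector {ω : ℝ} {w z : ℂ} (hw : w ∈ closedSector ω) (hz : z ≠ 0)
    (h : |z.arg| + ω < π) : w + z ∈ closedSector (max ω |z.arg|) := by
  rcases hw with rfl | hw
  · exact .inr (by simp)
  by_cases hw₀ : w = 0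
  · exact .inr (by simp [hw₀])
  exact .inr ((abs_arg_add_le_max hw₀ hz (by linarith)).trans (max_le_max_right _ hw))

theorem sub_notMem_closedSector {ω s : ℝ} {z ζ : ℂ} (hz : z ≠ 0) (h : |z.arg| + ω < π)
    (hs : max ω |z.arg| ≤ s) (hζ : ζ ∉ closedSector s) : ζ - z ∉ closedSector ω :=
  fun hζz ↦ hζ (closedSector_mono hs (by simpa using add_mem_closedSector hζz hz h))

theorem norm_mul_sin_le_norm_sub_of_le_abs_arg_sub {z ζ : ℂ} (hz : z ≠ 0) (hζ : ζ ≠ 0) {δ : ℝ}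
    (hδ₀ : 0 ≤ δ) (hδ : δ ≤ π / 2) (h : δ ≤ |ζ.arg| - |z.arg|) : ‖ζ‖ * Real.sin δ ≤ ‖ζ - z‖ := by
  refine InnerProductGeometry.norm_mul_sin_le_norm_sub hδ₀ hδ ?_
  have := angle_le_angle_add_angle 1 z ζ
  rw [angle_one_left hz, angle_one_left hζ, angle_comm] at this
  linarith

end Complex

theorem ContinuousLinearMap.add_smul_one_sub_smul_one {X : Type*} [NormedAddCommGroup X]
    [NormedSpace ℂ X] (T : X →L[ℂ] X) (z ζ : ℂ) :
    T + z • (1 : X →L[ℂ] X) - ζ • (1 : X →L[ℂ] X) = T - (ζ - z) • (1 : X →L[ℂ] X) := by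
  rw [sub_smul]; abel

theorem stmt_6_general (X : Type*) [NormedAddCommGroup X] [NormedSpace ℂ X] [CompleteSpace X]
    (T : X →L[ℂ] X) (ωT : ℝ) (M : ℝ) (hM : 0 < M)
    (z : ℂ) (hz : z ≠ 0) (hzarg : |z.arg| + ωT < Real.pi)
    (ω' : ℝ) (hω' : ω' ∈ Set.Ioo (max ωT |z.arg|) Real.pi)
    (hres : ∀ μ : ℂ, μ ≠ 0 → ωT < |μ.arg| →
      IsUnit (T - μ • (1 : X →L[ℂ] X)) ∧
        ‖Ring.inverse (T - μ • (1 : X →L[ℂ] X))‖ ≤ M / ‖μ‖) :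
    spectrum ℂ (T + z • (1 : X →L[ℂ] X)) ⊆
        {ζ : ℂ | ζ = 0 ∨ |ζ.arg| ≤ max ωT |z.arg|} ∧
    ∀ lam : ℂ, lam ≠ 0 → ω' < |lam.arg| →
      IsUnit (T + z • (1 : X →L[ℂ] X) - lam • (1 : X →L[ℂ] X)) ∧
        ‖Ring.inverse (T + z • (1 : X →L[ℂ] X) - lam • (1 : X →L[ℂ] X))‖ ≤
          (M / min (Real.sin ((ω' - |z.arg|) / 2)) (Real.cos (ω' / 2))) / ‖lam‖ := by
  obtain ⟨hω'₀, hω'π⟩ := hω'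
  have hshift {ζ : ℂ} (hζ : ζ ∉ Complex.closedSector (max ωT |z.arg|)) :
      IsUnit (T + z • (1 : X →L[ℂ] X) - ζ • (1 : X →L[ℂ] X)) ∧
        ‖Ring.inverse (T + z • (1 : X →L[ℂ] X) - ζ • (1 : X →L[ℂ] X))‖ ≤ M / ‖ζ - z‖ := by
    rw [T.add_smul_one_sub_smul_one]
    obtain ⟨hζz, hζzarg⟩ :=
      Complex.notMem_closedSector.mp (Complex.sub_notMem_closedSector hz hzarg le_rfl hζ)
    exact hres _ hζz hζzarg
  refine ⟨fun ζ hζ ↦ ?_, fun lam hlam hlamarg ↦ ?_⟩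
  · by_contra hζ'
    refine spectrum.mem_iff.mp hζ ?_
    rw [Algebra.algebraMap_eq_smul_one, ← neg_sub, IsUnit.neg_iff]
    exact (hshift hζ').1
  · obtain ⟨hunit, hbound⟩ := hshift (Complex.notMem_closedSector.mpr ⟨hlam, by linarith⟩)
    refine ⟨hunit, hbound.trans ?_⟩
    have hzω' : |z.arg| < ω' := (le_max_right _ _).trans_lt hω'₀
    have hmin : 0 < min (Real.sin ((ω' - |z.arg|) / 2)) (Real.cos (ω' / 2)) :=
      lt_min (Real.sin_pos_of_pos_of_lt_pi (by linarith) (by linarith [abs_nonneg z.arg]))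
        (Real.cos_pos_of_mem_Ioo ⟨by linarith [abs_nonneg z.arg], by linarith⟩)
    have hdist : ‖lam‖ * Real.sin ((ω' - |z.arg|) / 2) ≤ ‖lam - z‖ :=
      Complex.norm_mul_sin_le_norm_sub_of_le_abs_arg_sub hz hlam (by linarith)
        (by linarith [abs_nonneg z.arg]) (by linarith)
    rw [div_div]
    refine div_le_div_of_nonneg_left hM.le (by positivity) ?_
    calc min _ _ * ‖lam‖ ≤ Real.sin ((ω' - |z.arg|) / 2) * ‖lam‖ := by gcongr; apply min_le_left
      _ ≤ ‖lam - z‖ := by rwa [mul_comm]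

theorem stmt_6 (X : Type*) [NormedAddCommGroup X] [NormedSpace ℂ X] [CompleteSpace X]
    (T : X →L[ℂ] X) (ωT : ℝ) (hωT : ωT ∈ Set.Ico 0 Real.pi) (M : ℝ) (hM : 0 < M)
    (z : ℂ) (hz : z ≠ 0) (hzarg : |z.arg| + ωT < Real.pi)
    (ω' : ℝ) (hω' : ω' ∈ Set.Ioo (max ωT |z.arg|) Real.pi)
    (hres : ∀ μ : ℂ, μ ≠ 0 → ωT < |μ.arg| →
      IsUnit (T - μ • (1 : X →L[ℂ] X)) ∧
        ‖Ring.inverse (T - μ • (1 : X →L[ℂ] X))‖ ≤ M / ‖μ‖) :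
    spectrum ℂ (T + z • (1 : X →L[ℂ] X)) ⊆
        {ζ : ℂ | ζ = 0 ∨ |ζ.arg| ≤ max ωT |z.arg|} ∧
    ∀ lam : ℂ, lam ≠ 0 → ω' < |lam.arg| →
      IsUnit (T + z • (1 : X →L[ℂ] X) - lam • (1 : X →L[ℂ] X)) ∧
        ‖Ring.inverse (T + z • (1 : X →L[ℂ] X) - lam • (1 : X →L[ℂ] X))‖ ≤
          (M / min (Real.sin ((ω' - |z.arg|) / 2)) (Real.cos (ω' / 2))) / ‖lam‖ :=
  stmt_6_general X T ωT M hM z hz hzarg ω' hω' hres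
end

section
/- Let X be a complex Banach space, T a bounded linear operator on X, ω_T ∈ (0, π), and M > 0. Assume that every nonzero complex number μ with |arg μ| > ω_T lies in the resolvent set of T and satisfies ‖(T − μI)⁻¹‖ ≤ M/|μ|. Then for every nonzero complex number z with |arg z| + ω_T < π: (i) the spectrum of T + zI is contained in the closed sector S̄_{max(ω_T, π − ω_T)}; and (ii) for every ω′ ∈ (max(ω_T, π − ω_T), π) and every nonzero complex number λ with |arg λ| > ω′, λ lies in the resolvent set of T + zI and ‖(T + zI − λI)⁻¹‖ ≤ C/|λ|, where C = M / min( sin((ω′ − (π − ω_T))/2), sin(π − ω_T/2) ) does not depend on z and λ. -/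
/-!
Put `μ = λ - z`, so that `T + zI - λI = T - μI`; everything reduces to two facts about `μ`.
First `ω_T < |arg μ|`: from `|arg λ| > max(ω_T, π - ω_T)` we get `cos |arg λ| < -|cos ω_T|`,
from `|arg z| ≤ π - ω_T` we get `Re z ≥ -|z| cos ω_T`, and with `||μ| - |z|| ≤ |λ|` this gives
`Re μ < |μ| cos ω_T`. Second `|μ| ≥ sin (δ / 2) |λ|` for `δ = ω' - (π - ω_T)`: the angle between
`λ` and `z` is at least `|arg λ| - |arg z| > δ`, and the law of cosines bounds `|λ - z|` below.
-/

open Real InnerProductGeometry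

theorem InnerProductGeometry.sin_half_mul_norm_le_norm_sub {V : Type*} [NormedAddCommGroup V]
    [InnerProductSpace ℝ V] {x y : V} {δ : ℝ} (hδ : 0 ≤ δ) (hangle : δ ≤ angle x y) :
    sin (δ / 2) * ‖x‖ ≤ ‖x - y‖ := by
  have hδπ : δ ≤ π := hangle.trans (angle_le_pi x y)
  have hcos : cos (angle x y) ≤ cos δ :=
    cos_le_cos_of_nonneg_of_le_pi hδ (angle_le_pi x y) hangle
  have hsin : 0 ≤ sin (δ / 2) := sin_nonneg_of_nonneg_of_le_pi (by linarith) (by linarith)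
  have hsplit : ‖x‖ ^ 2 + ‖y‖ ^ 2 - 2 * ‖x‖ * ‖y‖ * cos δ =
      sin (δ / 2) ^ 2 * (‖x‖ + ‖y‖) ^ 2 + cos (δ / 2) ^ 2 * (‖x‖ - ‖y‖) ^ 2 := by
    have h2 : cos δ = 2 * cos (δ / 2) ^ 2 - 1 := by
      rw [← cos_two_mul]; ring_nf
    rw [h2]; linear_combination (-(‖x‖ + ‖y‖) ^ 2) * sin_sq_add_cos_sq (δ / 2)
  have hsq : (sin (δ / 2) * ‖x‖) ^ 2 ≤ ‖x - y‖ ^ 2 := calc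
    (sin (δ / 2) * ‖x‖) ^ 2
        ≤ sin (δ / 2) ^ 2 * (‖x‖ + ‖y‖) ^ 2 + cos (δ / 2) ^ 2 * (‖x‖ - ‖y‖) ^ 2 := by
      rw [mul_pow]
      refine le_add_of_le_of_nonneg ?_ (by positivity)
      gcongr
      exact le_add_of_nonneg_right (norm_nonneg y)
    _ = ‖x‖ ^ 2 + ‖y‖ ^ 2 - 2 * ‖x‖ * ‖y‖ * cos δ := hsplit.symm
    _ ≤ ‖x‖ ^ 2 + ‖y‖ ^ 2 - 2 * ‖x‖ * ‖y‖ * cos (angle x y) := by gcongr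
    _ = ‖x - y‖ ^ 2 := by
      simp only [sq, norm_sub_sq_eq_norm_sq_add_norm_sq_sub_two_mul_norm_mul_norm_mul_cos_angle]
  exact (pow_le_pow_iff_left₀ (mul_nonneg hsin (norm_nonneg x)) (norm_nonneg _) two_ne_zero).1 hsq

namespace Complex

theorem abs_arg_sub_abs_arg_le_angle {x y : ℂ} (hx : x ≠ 0) (hy : y ≠ 0) :
    |x.arg| - |y.arg| ≤ angle x y := by
  rw [← angle_one_right hx, ← angle_one_right hy]
  linarith [angle_le_angle_add_angle x y 1]

theorem re_lt_norm_mul_cos_iff {w : ℂ} {m : ℝ} (hm0 : 0 ≤ m) (hmπ : m ≤ π) :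
    w.re < ‖w‖ * Real.cos m ↔ m < |w.arg| := by
  rcases eq_or_ne w 0 with rfl | hw
  · simpa using hm0
  rw [← norm_mul_cos_arg, ← Real.cos_abs, mul_lt_mul_iff_right₀ (norm_pos_iff.2 hw)]
  exact strictAntiOn_cos.lt_iff_gt ⟨abs_nonneg _, abs_arg_le_pi w⟩ ⟨hm0, hmπ⟩

theorem lt_abs_arg_sub {ω : ℝ} {z w : ℂ} (hω0 : 0 ≤ ω) (hωπ : ω ≤ π)
    (hz : |z.arg| ≤ π - ω) (hw : max ω (π - ω) < |w.arg|) : ω < |(w - z).arg| := by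
  have hmax := max_lt_iff.1 hw
  have hw0 : w ≠ 0 := by
    rintro rfl
    rw [arg_zero, abs_zero] at hmax
    linarith [hmax.1]
  have hcos_w : Real.cos |w.arg| < -|Real.cos ω| := by
    have hI := abs_arg_le_pi w
    have h1 := strictAntiOn_cos ⟨hω0, hωπ⟩ ⟨by linarith, hI⟩ hmax.1
    have h2 := strictAntiOn_cos ⟨by linarith, by linarith⟩ ⟨by linarith, hI⟩ hmax.2
    rw [Real.cos_pi_sub] at h2
    cases abs_cases (Real.cos ω) <;> linarith
  have hw_re : w.re < -(‖w‖ * |Real.cos ω|) := by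
    rw [← norm_mul_cos_arg, ← Real.cos_abs, ← mul_neg]
    exact mul_lt_mul_of_pos_left hcos_w (norm_pos_iff.2 hw0)
  have hz_re : -(‖z‖ * Real.cos ω) ≤ z.re := by
    rw [← mul_neg, ← Real.cos_pi_sub]
    exact not_lt.1 fun h => (re_lt_norm_mul_cos_iff (by linarith) (by linarith)).1 h |>.not_ge hz
  have htri : |‖w - z‖ - ‖z‖| ≤ ‖w‖ := by
    simpa using abs_norm_sub_norm_le (w - z) (-z)
  rw [← re_lt_norm_mul_cos_iff hω0 hωπ]
  calc (w - z).re = w.re - z.re := sub_re w z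
    _ < -(‖w‖ * |Real.cos ω|) + ‖z‖ * Real.cos ω := by linarith
    _ ≤ -(|‖w - z‖ - ‖z‖| * |Real.cos ω|) + ‖z‖ * Real.cos ω := by
      gcongr
    _ ≤ (‖w - z‖ - ‖z‖) * Real.cos ω + ‖z‖ * Real.cos ω := by
      gcongr; rw [← abs_mul]; exact neg_abs_le _
    _ = ‖w - z‖ * Real.cos ω := by ring

end Complex

theorem spectrum.notMem_of_isUnit_sub_smul_one {R A : Type*} [CommSemiring R] [Ring A]
    [Algebra R A] {a : A} {r : R} (h : IsUnit (a - r • 1)) : r ∉ spectrum R a := by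
  rw [spectrum.notMem_iff, Algebra.algebraMap_eq_smul_one, ← neg_sub]
  exact h.neg

theorem stmt_7_general (X : Type*) [NormedAddCommGroup X] [NormedSpace ℂ X]
    (T : X →L[ℂ] X) (ωT : ℝ) (hωT : ωT ∈ Set.Ioo 0 Real.pi) (M : ℝ) (hM : 0 < M)
    (hres : ∀ μ : ℂ, μ ≠ 0 → ωT < |μ.arg| →
      IsUnit (T - μ • (1 : X →L[ℂ] X)) ∧
        ‖Ring.inverse (T - μ • (1 : X →L[ℂ] X))‖ ≤ M / ‖μ‖) :
    ∀ z : ℂ, z ≠ 0 → |z.arg| + ωT < Real.pi →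
      spectrum ℂ (T + z • (1 : X →L[ℂ] X)) ⊆
          {ζ : ℂ | ζ = 0 ∨ |ζ.arg| ≤ max ωT (Real.pi - ωT)} ∧
      ∀ ω' : ℝ, ω' ∈ Set.Ioo (max ωT (Real.pi - ωT)) Real.pi →
        ∀ lam : ℂ, lam ≠ 0 → ω' < |lam.arg| →
          IsUnit (T + z • (1 : X →L[ℂ] X) - lam • (1 : X →L[ℂ] X)) ∧
            ‖Ring.inverse (T + z • (1 : X →L[ℂ] X) - lam • (1 : X →L[ℂ] X))‖ ≤
              (M / min (Real.sin ((ω' - (Real.pi - ωT)) / 2)) (Real.sin (Real.pi - ωT / 2)))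
                / ‖lam‖ := by
  obtain ⟨hωT0, hωTπ⟩ := hωT
  intro z hz hzarg
  have hshifted : ∀ lam : ℂ, max ωT (π - ωT) < |lam.arg| →
      IsUnit (T + z • (1 : X →L[ℂ] X) - lam • (1 : X →L[ℂ] X)) ∧
        ‖Ring.inverse (T + z • (1 : X →L[ℂ] X) - lam • (1 : X →L[ℂ] X))‖ ≤ M / ‖lam - z‖ := by
    intro lam hlam
    have harg := Complex.lt_abs_arg_sub (z := z) hωT0.le hωTπ.le (by linarith) hlam
    have hne : lam - z ≠ 0 := fun h => by
      rw [h, Complex.arg_zero, abs_zero] at harg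
      linarith
    rw [show T + z • (1 : X →L[ℂ] X) - lam • 1 = T - (lam - z) • 1 by rw [sub_smul]; abel]
    exact hres _ hne harg
  refine ⟨fun ζ hζ => ?_, fun ω' hω' lam hlam hlarg => ?_⟩
  · by_contra hout
    simp only [Set.mem_ofPred_eq, not_or, not_le] at hout
    exact spectrum.notMem_of_isUnit_sub_smul_one (hshifted ζ hout.2).1 hζ
  obtain ⟨hunit, hbound⟩ := hshifted lam (hω'.1.trans hlarg)
  refine ⟨hunit, hbound.trans ?_⟩
  have hmax_pi : π - ωT < ω' := (max_lt_iff.1 hω'.1).2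
  have hc : 0 < min (sin ((ω' - (π - ωT)) / 2)) (sin (π - ωT / 2)) :=
    lt_min (sin_pos_of_pos_of_lt_pi (by linarith) (by linarith [hω'.2]))
      (sin_pos_of_pos_of_lt_pi (by linarith) (by linarith))
  have hangle : ω' - (π - ωT) ≤ angle lam z :=
    le_trans (by linarith) (Complex.abs_arg_sub_abs_arg_le_angle hlam hz)
  have hnorm : min (sin ((ω' - (π - ωT)) / 2)) (sin (π - ωT / 2)) * ‖lam‖ ≤ ‖lam - z‖ :=
    (mul_le_mul_of_nonneg_right (min_le_left _ _) (norm_nonneg _)).trans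
      (sin_half_mul_norm_le_norm_sub (by linarith) hangle)
  rw [div_div]
  exact div_le_div_of_nonneg_left hM.le (by positivity) hnorm

theorem stmt_7 (X : Type*) [NormedAddCommGroup X] [NormedSpace ℂ X] [CompleteSpace X]
    (T : X →L[ℂ] X) (ωT : ℝ) (hωT : ωT ∈ Set.Ioo 0 Real.pi) (M : ℝ) (hM : 0 < M)
    (hres : ∀ μ : ℂ, μ ≠ 0 → ωT < |μ.arg| →
      IsUnit (T - μ • (1 : X →L[ℂ] X)) ∧
        ‖Ring.inverse (T - μ • (1 : X →L[ℂ] X))‖ ≤ M / ‖μ‖) :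
    ∀ z : ℂ, z ≠ 0 → |z.arg| + ωT < Real.pi →
      spectrum ℂ (T + z • (1 : X →L[ℂ] X)) ⊆
          {ζ : ℂ | ζ = 0 ∨ |ζ.arg| ≤ max ωT (Real.pi - ωT)} ∧
      ∀ ω' : ℝ, ω' ∈ Set.Ioo (max ωT (Real.pi - ωT)) Real.pi →
        ∀ lam : ℂ, lam ≠ 0 → ω' < |lam.arg| →
          IsUnit (T + z • (1 : X →L[ℂ] X) - lam • (1 : X →L[ℂ] X)) ∧
            ‖Ring.inverse (T + z • (1 : X →L[ℂ] X) - lam • (1 : X →L[ℂ] X))‖ ≤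
              (M / min (Real.sin ((ω' - (Real.pi - ωT)) / 2)) (Real.sin (Real.pi - ωT / 2)))
                / ‖lam‖ :=
  stmt_7_general X T ωT hωT M hM hres
end

section
/- Let X be a complex Banach space and T a bounded linear operator on X such that the spectrum of T is contained in the open left half-plane {w ∈ ℂ : Re w < 0}, and such that there exist constants M, δ > 0 with ‖exp(sT)‖ ≤ M e^{−δs} for all s ≥ 0. Then for every ξ ∈ ℝ, the operator T² + 4π²ξ²·I is invertible, the operator-valued function x ↦ exp(|x|T) is Bochner integrable on ℝ, and ∫_ℝ e^{−2πiξx} exp(|x|T) dx = −2T (T² + 4π²ξ²·I)⁻¹. -/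
/-!
For purely imaginary `w` the shifted operator `T + w` inherits the decay of `exp (s T)`, since
`exp (s (T + w)) = e^{s w} exp (s T)` with `|e^{s w}| = 1`. For any `S` with such decay,
`J = ∫₀^∞ exp (s S) ds` converges, and since `d/ds exp (s S) = S exp (s S) = exp (s S) S` with
`exp (s S) → 0`, it satisfies `S J = J S = -1`: `S` is invertible and `J = -S⁻¹`. Splitting the Fourier integral
at `0` turns it into two such integrals, for `S = T ∓ 2πiξ`, and
`(T - 2πiξ)⁻¹ + (T + 2πiξ)⁻¹ = 2T (T² + 4π²ξ²)⁻¹`.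
-/

open MeasureTheory Set Filter Topology NormedSpace

section HalfLine

variable {E : Type*} [NormedAddCommGroup E]

theorem integrable_comp_abs_of_integrableOn_Ioi {f : ℝ → E} (hf : IntegrableOn f (Ioi 0)) :
    Integrable (fun x => f |x|) := by
  have hIoi : IntegrableOn (fun x => f |x|) (Ioi 0) :=
    hf.congr_fun (fun x hx => by rw [abs_of_pos hx]) measurableSet_Ioi
  have hIic : IntegrableOn (fun x => f |x|) (Iic 0) := by
    have hneg : MeasurableEmbedding fun x : ℝ => -x := (Homeomorph.neg ℝ).measurableEmbedding
    rw [← Measure.map_neg_eq_self (volume : Measure ℝ), hneg.integrableOn_map_iff]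
    simp_rw [Function.comp_def, abs_neg, neg_preimage, neg_Iic, neg_zero]
    exact Iff.mpr integrableOn_Ici_iff_integrableOn_Ioi hIoi
  simpa only [Iic_union_Ioi, integrableOn_univ] using hIic.union hIoi

theorem integral_eq_integral_Ioi_add_integral_Ioi_comp_neg [NormedSpace ℝ E] {f : ℝ → E}
    (hf : Integrable f) : ∫ x, f x = (∫ x in Ioi 0, f x) + ∫ x in Ioi 0, f (-x) := by
  rw [integral_comp_neg_Ioi, neg_zero, add_comm,
    intervalIntegral.integral_Iic_add_Ioi hf.integrableOn hf.integrableOn]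

end HalfLine

section Algebra

variable {𝕜 R : Type*} [CommRing 𝕜] [Ring R] [Algebra 𝕜 R]

theorem add_smul_one_mul_sub_smul_one (S : R) (w : 𝕜) :
    (S + w • 1) * (S - w • 1) = S ^ 2 - w ^ 2 • 1 := by
  rw [← ((Commute.one_right S).smul_right w).sq_sub_sq, smul_pow, one_pow]

theorem inverse_add_smul_one_add_inverse_sub_smul_one {S : R} {w : 𝕜}
    (hp : IsUnit (S + w • 1)) (hm : IsUnit (S - w • 1)) :
    Ring.inverse (S + w • 1) + Ring.inverse (S - w • 1) =
      (2 : 𝕜) • (S * Ring.inverse (S ^ 2 - w ^ 2 • 1)) := by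
  have hc : Commute S (w • 1) := (Commute.one_right S).smul_right w
  have hSp : Commute S (Ring.inverse (S + w • 1)) := by
    rw [Ring.inverse_of_isUnit hp]
    exact Commute.units_inv_right (by rw [hp.unit_spec]; exact (Commute.refl S).add_right hc)
  have hpm : Commute (S + w • 1) (S - w • 1) :=
    ((Commute.refl S).sub_right hc).add_left (hc.symm.sub_right (Commute.refl _))
  rw [Ring.inverse_add_inverse (iff_of_true hp hm), add_add_sub_cancel, ← two_smul 𝕜,
    ← add_smul_one_mul_sub_smul_one, Ring.mul_inverse_rev' hpm, mul_smul_comm, smul_mul_assoc,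
    ← hSp.eq, mul_assoc, hpm.ringInverse_ringInverse.eq]

end Algebra

theorem sq_add_four_pi_sq_mul_sq_smul_one {R : Type*} [Ring R] [Algebra ℂ R]
    (S : R) (ξ : ℝ) :
    S ^ 2 + ((4 * Real.pi ^ 2 * ξ ^ 2 : ℝ) : ℂ) • 1 =
      S ^ 2 - ((2 * Real.pi * ξ : ℝ) * Complex.I) ^ 2 • 1 := by
  rw [sub_eq_add_neg, ← neg_smul, mul_pow, Complex.I_sq]
  push_cast
  ring_nf

section ExpDecay

variable {A : Type*} [NormedRing A] [NormedAlgebra ℂ A] [CompleteSpace A]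

theorem hasDerivAt_exp_ofReal_smul (S : A) (x : ℝ) :
    HasDerivAt (fun y : ℝ => exp ((y : ℂ) • S)) (S * exp ((x : ℂ) • S)) x := by
  have h := ((hasDerivAt_exp_smul_const' (𝕂 := ℂ) S (x : ℂ)).hasFDerivAt.restrictScalars
    ℝ).comp x Complex.ofRealCLM.hasFDerivAt
  simpa [Function.comp_def] using h.hasDerivAt

theorem exp_ofReal_smul_add_smul_one (S : A) (w : ℂ) (x : ℝ) :
    exp ((x : ℂ) • (S + w • 1)) = Complex.exp (x * w) • exp ((x : ℂ) • S) := by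
  let _ : NormedAlgebra ℚ A := .restrictScalars ℚ ℂ A
  have hcomm : Commute ((x : ℂ) • S) (((x : ℂ) * w) • 1) :=
    ((Commute.one_right S).smul_left _).smul_right _
  rw [smul_add, smul_smul, exp_add_of_commute hcomm, ← Algebra.algebraMap_eq_smul_one,
    ← algebraMap_exp_comm, Algebra.algebraMap_eq_smul_one, mul_smul_one, Complex.exp_eq_exp_ℂ]

theorem norm_exp_ofReal_smul_add_smul_one (S : A) {w : ℂ} (hw : w.re = 0) (x : ℝ) :
    ‖exp ((x : ℂ) • (S + w • 1))‖ = ‖exp ((x : ℂ) • S)‖ := by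
  rw [exp_ofReal_smul_add_smul_one, norm_smul, Complex.norm_exp, Complex.re_ofReal_mul, hw,
    mul_zero, Real.exp_zero, one_mul]

def HasExpDecay (S : A) (M δ : ℝ) : Prop :=
  ∀ x : ℝ, 0 ≤ x → ‖exp ((x : ℂ) • S)‖ ≤ M * Real.exp (-δ * x)

namespace HasExpDecay

variable {S : A} {M δ : ℝ}

theorem add_smul_one (hS : HasExpDecay S M δ) {w : ℂ} (hw : w.re = 0) :
    HasExpDecay (S + w • 1) M δ :=
  fun x hx => (norm_exp_ofReal_smul_add_smul_one S hw x).trans_le (hS x hx)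

theorem sub_smul_one (hS : HasExpDecay S M δ) {w : ℂ} (hw : w.re = 0) :
    HasExpDecay (S - w • 1) M δ := by
  simpa only [sub_eq_add_neg, ← neg_smul] using hS.add_smul_one (w := -w) (by simp [hw])

theorem integrableOn_Ioi (hS : HasExpDecay S M δ) (hδ : 0 < δ) :
    IntegrableOn (fun x : ℝ => exp ((x : ℂ) • S)) (Ioi 0) := by
  have hcont : Continuous fun x : ℝ => exp ((x : ℂ) • S) :=
    continuous_iff_continuousAt.mpr fun x => (hasDerivAt_exp_ofReal_smul S x).continuousAt
  refine Integrable.mono' ((exp_neg_integrableOn_Ioi 0 hδ).const_mul M)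
    hcont.aestronglyMeasurable.restrict ?_
  filter_upwards [ae_restrict_mem measurableSet_Ioi] with x hx
  simpa only [neg_mul] using hS x (le_of_lt hx)

theorem mul_integral_Ioi (hS : HasExpDecay S M δ) (hδ : 0 < δ) :
    S * ∫ x in Ioi (0 : ℝ), exp ((x : ℂ) • S) = -1 := by
  have hlim : Tendsto (fun x : ℝ => exp ((x : ℂ) • S)) atTop (𝓝 0) := by
    refine squeeze_zero_norm' ((eventually_ge_atTop 0).mono hS) ?_
    simpa using (Real.tendsto_exp_atBot.comp
      (tendsto_id.const_mul_atTop_of_neg (neg_lt_zero.mpr hδ))).const_mul M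
  rw [← integral_const_mul_of_integrable (hS.integrableOn_Ioi hδ),
    integral_Ioi_of_hasDerivAt_of_tendsto' (fun x _ => hasDerivAt_exp_ofReal_smul S x)
      ((hS.integrableOn_Ioi hδ).const_mul S) hlim]
  simp

theorem integral_Ioi_mul (hS : HasExpDecay S M δ) (hδ : 0 < δ) :
    (∫ x in Ioi (0 : ℝ), exp ((x : ℂ) • S)) * S = -1 := by
  rw [← integral_mul_const_of_integrable (hS.integrableOn_Ioi hδ), ← hS.mul_integral_Ioi hδ,
    ← integral_const_mul_of_integrable (hS.integrableOn_Ioi hδ)]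
  congr 1 with x
  exact (((Commute.refl S).smul_right _).exp_right).eq.symm

theorem isUnit (hS : HasExpDecay S M δ) (hδ : 0 < δ) : IsUnit S :=
  isUnit_iff_exists.mpr ⟨-∫ x in Ioi (0 : ℝ), exp ((x : ℂ) • S),
    by rw [mul_neg, hS.mul_integral_Ioi hδ, neg_neg],
    by rw [neg_mul, hS.integral_Ioi_mul hδ, neg_neg]⟩

theorem integral_Ioi (hS : HasExpDecay S M δ) (hδ : 0 < δ) :
    ∫ x in Ioi (0 : ℝ), exp ((x : ℂ) • S) = -Ring.inverse S := by
  rw [← Ring.inverse_mul_cancel_left _ (∫ x in Ioi (0 : ℝ), exp ((x : ℂ) • S))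
    (hS.isUnit hδ), hS.mul_integral_Ioi hδ, mul_neg_one]

theorem integrable_exp_abs_smul (hS : HasExpDecay S M δ) (hδ : 0 < δ) :
    Integrable fun x : ℝ => exp (((|x| : ℝ) : ℂ) • S) :=
  integrable_comp_abs_of_integrableOn_Ioi (f := fun x : ℝ => exp ((x : ℂ) • S))
    (hS.integrableOn_Ioi hδ)

open Real Complex in
theorem isUnit_sq_add_four_pi_sq_mul_sq_smul_one (hS : HasExpDecay S M δ) (hδ : 0 < δ)
    (ξ : ℝ) :
    IsUnit (S ^ 2 + ((4 * π ^ 2 * ξ ^ 2 : ℝ) : ℂ) • 1) := by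
  have hw : (((2 * π * ξ : ℝ) : ℂ) * I).re = 0 := by simp
  rw [sq_add_four_pi_sq_mul_sq_smul_one, ← add_smul_one_mul_sub_smul_one]
  exact ((hS.add_smul_one hw).isUnit hδ).mul ((hS.sub_smul_one hw).isUnit hδ)

open Real Complex in
theorem integral_fourier_exp_abs_smul (hS : HasExpDecay S M δ) (hδ : 0 < δ) (ξ : ℝ) :
    ∫ x : ℝ, Complex.exp (-2 * π * I * ξ * x) • NormedSpace.exp (((|x| : ℝ) : ℂ) • S)
      = (-2 : ℂ) • (S * Ring.inverse (S ^ 2 + ((4 * π ^ 2 * ξ ^ 2 : ℝ) : ℂ) • 1)) := by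
  set w : ℂ := (2 * π * ξ : ℝ) * I
  have hw : w.re = 0 := by simp [w]
  have hF : Integrable fun x : ℝ => Complex.exp (-2 * π * I * ξ * x) •
      NormedSpace.exp (((|x| : ℝ) : ℂ) • S) := by
    refine (hS.integrable_exp_abs_smul hδ).bdd_smul 1 (Continuous.aestronglyMeasurable
      (by fun_prop : Continuous fun x : ℝ => Complex.exp (-2 * π * I * ξ * x)))
      (ae_of_all _ fun x => ?_)
    simp [Complex.norm_exp]
  have hpos : ∫ x in Ioi (0 : ℝ), Complex.exp (-2 * π * I * ξ * x) •
      NormedSpace.exp (((|x| : ℝ) : ℂ) • S) =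
        ∫ x in Ioi (0 : ℝ), NormedSpace.exp ((x : ℂ) • (S - w • 1)) := by
    refine setIntegral_congr_fun measurableSet_Ioi fun x (hx : 0 < x) => ?_
    rw [sub_eq_add_neg, ← neg_smul, exp_ofReal_smul_add_smul_one, abs_of_pos hx]
    congr 2
    simp only [w]
    push_cast
    ring
  have hneg : ∫ x in Ioi (0 : ℝ), Complex.exp (-2 * π * I * ξ * (-x : ℝ)) •
      NormedSpace.exp (((|-x| : ℝ) : ℂ) • S) =
        ∫ x in Ioi (0 : ℝ), NormedSpace.exp ((x : ℂ) • (S + w • 1)) := by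
    refine setIntegral_congr_fun measurableSet_Ioi fun x (hx : 0 < x) => ?_
    rw [exp_ofReal_smul_add_smul_one, abs_neg, abs_of_pos hx]
    congr 2
    simp only [w]
    push_cast
    ring
  rw [integral_eq_integral_Ioi_add_integral_Ioi_comp_neg hF, hpos, hneg,
    (hS.sub_smul_one hw).integral_Ioi hδ, (hS.add_smul_one hw).integral_Ioi hδ,
    sq_add_four_pi_sq_mul_sq_smul_one, neg_smul, ← inverse_add_smul_one_add_inverse_sub_smul_one
      ((hS.add_smul_one hw).isUnit hδ) ((hS.sub_smul_one hw).isUnit hδ), neg_add, add_comm]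

end HasExpDecay

end ExpDecay

theorem stmt_9_general (X : Type*) [NormedAddCommGroup X] [NormedSpace ℂ X] [CompleteSpace X]
    (T : X →L[ℂ] X)
    (M δ : ℝ) (hδ : 0 < δ)
    (hdecay : ∀ s : ℝ, 0 ≤ s →
      ‖NormedSpace.exp ((s : ℂ) • T)‖ ≤ M * Real.exp (-δ * s)) (ξ : ℝ) :
    IsUnit (T ^ 2 + ((4 * Real.pi ^ 2 * ξ ^ 2 : ℝ) : ℂ) • (1 : X →L[ℂ] X)) ∧
    MeasureTheory.Integrable (fun x : ℝ => NormedSpace.exp (((|x| : ℝ) : ℂ) • T)) ∧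
    ∫ x : ℝ, Complex.exp (-2 * Real.pi * Complex.I * ξ * x) •
        NormedSpace.exp (((|x| : ℝ) : ℂ) • T) =
      (-2 : ℂ) • (T * Ring.inverse
        (T ^ 2 + ((4 * Real.pi ^ 2 * ξ ^ 2 : ℝ) : ℂ) • (1 : X →L[ℂ] X))) := by
  have hT : HasExpDecay T M δ := hdecay
  exact ⟨hT.isUnit_sq_add_four_pi_sq_mul_sq_smul_one hδ ξ, hT.integrable_exp_abs_smul hδ,
    hT.integral_fourier_exp_abs_smul hδ ξ⟩

theorem stmt_9 (X : Type*) [NormedAddCommGroup X] [NormedSpace ℂ X] [CompleteSpace X]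
    (T : X →L[ℂ] X) (hspec : spectrum ℂ T ⊆ {w : ℂ | w.re < 0})
    (M δ : ℝ) (hM : 0 < M) (hδ : 0 < δ)
    (hdecay : ∀ s : ℝ, 0 ≤ s →
      ‖NormedSpace.exp ((s : ℂ) • T)‖ ≤ M * Real.exp (-δ * s)) (ξ : ℝ) :
    IsUnit (T ^ 2 + ((4 * Real.pi ^ 2 * ξ ^ 2 : ℝ) : ℂ) • (1 : X →L[ℂ] X)) ∧
    MeasureTheory.Integrable (fun x : ℝ => NormedSpace.exp (((|x| : ℝ) : ℂ) • T)) ∧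
    ∫ x : ℝ, Complex.exp (-2 * Real.pi * Complex.I * ξ * x) •
        NormedSpace.exp (((|x| : ℝ) : ℂ) • T) =
      (-2 : ℂ) • (T * Ring.inverse
        (T ^ 2 + ((4 * Real.pi ^ 2 * ξ ^ 2 : ℝ) : ℂ) • (1 : X →L[ℂ] X))) :=
  stmt_9_general X T M δ hδ hdecay ξ
end

section
/- Let θ ∈ (0, π/2), ρ ≥ 0 and C > 0. Then |ρ² e^{2iθ} + C² ρ e^{iθ} − C³| ≥ (ρ² + C³) · sin(θ/2) · cos(θ/2). -/
/-! Multiplying by `e^{-iθ}` turns `a e^{2iθ} + b e^{iθ} - c` (with `a b c` real) into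
`a e^{iθ} + b - c e^{-iθ}`, whose imaginary part is `(a + c) sin θ`; the modulus dominates it.
With `a = ρ²`, `c = C³`, the norm is thus at least `|(ρ² + C³) sin θ|`, which is at least
`(ρ² + C³) sin θ / 2 = (ρ² + C³) sin(θ/2) cos(θ/2)`. -/

open Complex

theorem abs_mul_sin_le_norm_exp_quadratic (a b c θ : ℝ) :
    |(a + c) * Real.sin θ| ≤ ‖(a : ℂ) * exp (2 * I * θ) + b * exp (I * θ) - c‖ := by
  set w : ℂ := a * exp (2 * I * θ) + b * exp (I * θ) - c
  have hrot : w * exp (-θ * I) = a * exp (θ * I) + b - c * exp (-θ * I) := by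
    simp only [w, sub_mul, add_mul, mul_assoc, ← exp_add]
    ring_nf; simp
  have him : (w * exp (-θ * I)).im = (a + c) * Real.sin θ := by
    rw [hrot, ← ofReal_neg]
    simp only [sub_im, add_im, im_ofReal_mul, exp_ofReal_mul_I_im, ofReal_im, Real.sin_neg]
    ring
  calc |(a + c) * Real.sin θ| = |(w * exp (-θ * I)).im| := by rw [him]
    _ ≤ ‖w * exp (-θ * I)‖ := abs_im_le_norm _
    _ = ‖w‖ := by rw [norm_mul, ← ofReal_neg, norm_exp_ofReal_mul_I, mul_one]

theorem stmt_11_general (θ ρ C : ℝ) :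
    (ρ ^ 2 + C ^ 3) * Real.sin (θ / 2) * Real.cos (θ / 2) ≤
      ‖(ρ : ℂ) ^ 2 * Complex.exp (2 * Complex.I * θ) +
        (C : ℂ) ^ 2 * ρ * Complex.exp (Complex.I * θ) - (C : ℂ) ^ 3‖ := by
  have hsin : Real.sin (θ / 2) * Real.cos (θ / 2) = Real.sin θ / 2 := by
    have := Real.sin_two_mul (θ / 2)
    rw [mul_div_cancel₀ θ two_ne_zero] at this
    linarith
  have hnorm := abs_mul_sin_le_norm_exp_quadratic (ρ ^ 2) (C ^ 2 * ρ) (C ^ 3) θ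
  push_cast at hnorm
  rw [mul_assoc, hsin]
  linarith [le_abs_self ((ρ ^ 2 + C ^ 3) * Real.sin θ), abs_nonneg ((ρ ^ 2 + C ^ 3) * Real.sin θ)]

theorem stmt_11 (θ ρ C : ℝ) (hθ : θ ∈ Set.Ioo 0 (Real.pi / 2)) (hρ : 0 ≤ ρ) (hC : 0 < C) :
    (ρ ^ 2 + C ^ 3) * Real.sin (θ / 2) * Real.cos (θ / 2) ≤
      ‖(ρ : ℂ) ^ 2 * Complex.exp (2 * Complex.I * θ) +
        (C : ℂ) ^ 2 * ρ * Complex.exp (Complex.I * θ) - (C : ℂ) ^ 3‖ :=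
  stmt_11_general θ ρ C
end

section
/- Let X be a complex Banach space, a < b real numbers, c = b − a, and T an invertible bounded linear operator on X such that I − exp(2cT) is invertible. Let φ : ℝ → X be Bochner integrable on [a, b]. For x ∈ [a, b] define K(x) = ½ ( exp((b−x)T) exp(cT) − exp((x−a)T) ) (I − exp(2cT))⁻¹ T⁻¹ ∫_a^b exp((s−a)T) φ(s) ds + ½ ( exp((x−a)T) exp(cT) − exp((b−x)T) ) (I − exp(2cT))⁻¹ T⁻¹ ∫_a^b exp((b−s)T) φ(s) ds, and J(x) = ½ T⁻¹ ∫_a^b exp(|x−s|T) φ(s) ds. Then K(a) + J(a) = 0 and K(b) + J(b) = 0. -/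
/-! At `x = a` the kernel `exp (|x - s| T)` of `J` equals `exp ((s - a) T)`, and the coefficient of
the first integral in `K` becomes `(exp (c T)² - 1)(1 - exp (2 c T))⁻¹ T⁻¹ = -T⁻¹`, while that of
the second vanishes; so `K a = -½ T⁻¹ ∫ exp ((s - a) T) φ = -J a`. The endpoint `b` is symmetric. -/

open MeasureTheory NormedSpace

theorem exp_smul_add_smul {𝔸 : Type*} [NormedRing 𝔸] [NormedAlgebra ℂ 𝔸] [CompleteSpace 𝔸]
    (s t : ℂ) (x : 𝔸) : exp ((s + t) • x) = exp (s • x) * exp (t • x) := by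
  rw [add_smul]
  exact exp_add_of_commute_of_mem_ball (𝕂 := ℂ) (((Commute.refl x).smul_left s).smul_right t)
    ((expSeries_radius_eq_top ℂ 𝔸).symm ▸ edist_lt_top _ _)
    ((expSeries_radius_eq_top ℂ 𝔸).symm ▸ edist_lt_top _ _)

theorem sub_one_mul_inverse_one_sub {R : Type*} [Ring R] {u : R} (hu : IsUnit (1 - u)) :
    (u - 1) * Ring.inverse (1 - u) = -1 := by
  rw [← neg_sub, neg_mul, Ring.mul_inverse_cancel _ hu]

section AbsKernel

variable {E : Type*} [NormedAddCommGroup E] [NormedSpace ℝ E] {a b : ℝ}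

theorem integral_abs_sub_left_of_le (hab : a ≤ b) (g : ℝ → ℝ → E) :
    ∫ s in a..b, g |a - s| s = ∫ s in a..b, g (s - a) s := by
  refine intervalIntegral.integral_congr fun s hs => ?_
  rw [Set.uIcc_of_le hab] at hs
  simp only [abs_sub_comm a, abs_of_nonneg (sub_nonneg.2 hs.1)]

theorem integral_abs_sub_right_of_le (hab : a ≤ b) (g : ℝ → ℝ → E) :
    ∫ s in a..b, g |b - s| s = ∫ s in a..b, g (b - s) s := by
  refine intervalIntegral.integral_congr fun s hs => ?_
  rw [Set.uIcc_of_le hab] at hs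
  simp only [abs_of_nonneg (sub_nonneg.2 hs.2)]

end AbsKernel

theorem stmt_13_general (X : Type*) [NormedAddCommGroup X] [NormedSpace ℂ X] [CompleteSpace X]
    (a b c : ℝ) (hab : a < b) (hc : c = b - a)
    (T : X →L[ℂ] X)
    (hinv : IsUnit ((1 : X →L[ℂ] X) - exp (((2 * c : ℝ) : ℂ) • T)))
    (φ : ℝ → X)
    (K J : ℝ → X)
    (hK : ∀ x : ℝ, K x =
      ((1 / 2 : ℂ) • ((exp (((b - x : ℝ) : ℂ) • T) * exp ((c : ℂ) • T) -
            exp (((x - a : ℝ) : ℂ) • T)) *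
          Ring.inverse ((1 : X →L[ℂ] X) - exp (((2 * c : ℝ) : ℂ) • T)) *
          Ring.inverse T))
        (∫ s in a..b, (exp (((s - a : ℝ) : ℂ) • T)) (φ s)) +
      ((1 / 2 : ℂ) • ((exp (((x - a : ℝ) : ℂ) • T) * exp ((c : ℂ) • T) -
            exp (((b - x : ℝ) : ℂ) • T)) *
          Ring.inverse ((1 : X →L[ℂ] X) - exp (((2 * c : ℝ) : ℂ) • T)) *
          Ring.inverse T))
        (∫ s in a..b, (exp (((b - s : ℝ) : ℂ) • T)) (φ s)))
    (hJ : ∀ x : ℝ, J x =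
      ((1 / 2 : ℂ) • Ring.inverse T)
        (∫ s in a..b, (exp (((|x - s| : ℝ) : ℂ) • T)) (φ s))) :
    K a + J a = 0 ∧ K b + J b = 0 := by
  have hdouble : exp ((c : ℂ) • T) * exp ((c : ℂ) • T) = exp (((2 * c : ℝ) : ℂ) • T) := by
    rw [← exp_smul_add_smul (𝔸 := X →L[ℂ] X)]; push_cast; ring_nf
  have hcoef : (exp ((c : ℂ) • T) * exp ((c : ℂ) • T) - 1) *
      Ring.inverse (1 - exp (((2 * c : ℝ) : ℂ) • T)) = -1 := by
    rw [hdouble]; exact sub_one_mul_inverse_one_sub hinv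
  have hbc : b - a = c := hc.symm
  constructor
  · rw [hK, hJ, integral_abs_sub_left_of_le hab.le fun r s => exp ((r : ℂ) • T) (φ s)]
    simp only [hbc, sub_self, Complex.ofReal_zero, zero_smul, exp_zero, one_mul, hcoef]
    simp
  · rw [hK, hJ, integral_abs_sub_right_of_le hab.le fun r s => exp ((r : ℂ) • T) (φ s)]
    simp only [hbc, sub_self, Complex.ofReal_zero, zero_smul, exp_zero, one_mul, hcoef]
    simp

theorem stmt_13 (X : Type*) [NormedAddCommGroup X] [NormedSpace ℂ X] [CompleteSpace X]
    (a b c : ℝ) (hab : a < b) (hc : c = b - a)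
    (T : X →L[ℂ] X) (hT : IsUnit T)
    (hinv : IsUnit ((1 : X →L[ℂ] X) - exp (((2 * c : ℝ) : ℂ) • T)))
    (φ : ℝ → X) (hφ : IntegrableOn φ (Set.Icc a b))
    (K J : ℝ → X)
    (hK : ∀ x : ℝ, K x =
      ((1 / 2 : ℂ) • ((exp (((b - x : ℝ) : ℂ) • T) * exp ((c : ℂ) • T) -
            exp (((x - a : ℝ) : ℂ) • T)) *
          Ring.inverse ((1 : X →L[ℂ] X) - exp (((2 * c : ℝ) : ℂ) • T)) *
          Ring.inverse T))
        (∫ s in a..b, (exp (((s - a : ℝ) : ℂ) • T)) (φ s)) +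
      ((1 / 2 : ℂ) • ((exp (((x - a : ℝ) : ℂ) • T) * exp ((c : ℂ) • T) -
            exp (((b - x : ℝ) : ℂ) • T)) *
          Ring.inverse ((1 : X →L[ℂ] X) - exp (((2 * c : ℝ) : ℂ) • T)) *
          Ring.inverse T))
        (∫ s in a..b, (exp (((b - s : ℝ) : ℂ) • T)) (φ s)))
    (hJ : ∀ x : ℝ, J x =
      ((1 / 2 : ℂ) • Ring.inverse T)
        (∫ s in a..b, (exp (((|x - s| : ℝ) : ℂ) • T)) (φ s))) :
    K a + J a = 0 ∧ K b + J b = 0 :=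
  stmt_13_general X a b c hab hc T hinv φ K J hK hJ
end
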